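/- In the deep fully connected ReLU network covariance recursion with σ_w² > 2, define c_l = (σ_w²/2)^l and κ^{(l)} = K^{(l)}/c_l. Then the diagonal entries converge: κ^{(l)}(x,x) → v_x² where v_x = [σ_b²/(σ_w²/2 − 1) + K^{(0)}(x,x)]^{1/2}, and moreover κ^{(l)}(x,x') → v_x v_{x'} for all pairs, i.e. K^{(l)}/c_l → v vᵀ, a rank-one matrix. -/

import Mathlib

/-- The ReLU arc-cosine correlation mapping. -/
noncomputable def arcCosCorr (ρ : ℝ) : ℝ :=
  (1 / Real.pi) * (Real.sin (Real.arccos ρ) + (Real.pi - Real.arccos ρ) * ρ)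

/-!
Write `a = σ_w²/2` and `κ_l = K_l / a^l`. The map `(p, q, r) ↦ √p √q f(r / (√p √q))` is positively
homogeneous, so `κ_{l+1} = σ_b²/a^{l+1} + √κ_l(x,x) √κ_l(x',x') f(ρ_l(x,x'))`. On the diagonal
`f(1) = 1`, hence `κ_l(x,x)` is `K_0(x,x)` plus a partial geometric sum and tends to `v_x²`.
The Cauchy–Schwarz inequality `κ_l(x,x')² ≤ κ_l(x,x) κ_l(x',x')` survives each layer, and `f(ρ) ≥ ρ`
makes every off-diagonal entry nondecreasing; bounded by `v_x v_{x'}`, it converges to some `c`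
with `c = v_x v_{x'} f(c / (v_x v_{x'}))`, and since `f(ρ) > ρ` for `ρ < 1` this forces
`c = v_x v_{x'}`.
-/

open Filter Topology Real

theorem Real.mul_cos_lt_sin {θ : ℝ} (h0 : 0 < θ) (hπ : θ ≤ π) : θ * cos θ < sin θ := by
  rcases lt_or_ge θ (π / 2) with h | h
  · have hc : 0 < cos θ := cos_pos_of_mem_Ioo ⟨by linarith [pi_pos], h⟩
    have ht := lt_tan h0 h
    rwa [tan_eq_sin_div_cos, lt_div_iff₀ hc] at ht
  · have hc : cos θ ≤ 0 := cos_nonpos_of_pi_div_two_le_of_le h (by linarith [pi_pos])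
    rcases (sin_nonneg_of_nonneg_of_le_pi h0.le hπ).eq_or_lt with hs | hs
    · have : cos θ = -1 := by nlinarith [sin_sq_add_cos_sq θ]
      nlinarith
    · nlinarith

lemma arcCosCorr_one : arcCosCorr 1 = 1 := by
  simp [arcCosCorr, pi_ne_zero]

lemma arcCosCorr_le_one {ρ : ℝ} (h : ρ ≤ 1) : arcCosCorr ρ ≤ 1 := by
  have hθ := arccos_le_pi ρ
  have hsin := sin_le (arccos_nonneg ρ)
  have : (π - arccos ρ) * ρ ≤ π - arccos ρ := mul_le_of_le_one_right (by linarith) h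
  rw [arcCosCorr, one_div, ← div_eq_inv_mul, div_le_one pi_pos]
  linarith

/-- With `θ = arccos ρ`, `π (f(ρ) - ρ) = sin θ - θ cos θ`. -/
lemma lt_arcCosCorr {ρ : ℝ} (h1 : -1 ≤ ρ) (h2 : ρ < 1) : ρ < arcCosCorr ρ := by
  have h := mul_cos_lt_sin (arccos_pos.2 h2) (arccos_le_pi ρ)
  rw [cos_arccos h1 h2.le] at h
  rw [arcCosCorr, one_div, ← div_eq_inv_mul, lt_div_iff₀ pi_pos]
  linarith

lemma le_arcCosCorr {ρ : ℝ} (h1 : -1 ≤ ρ) (h2 : ρ ≤ 1) : ρ ≤ arcCosCorr ρ := by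
  rcases h2.eq_or_lt with rfl | h2
  · rw [arcCosCorr_one]
  · exact (lt_arcCosCorr h1 h2).le

lemma arcCosCorr_eq_self_iff {ρ : ℝ} (h1 : -1 ≤ ρ) (h2 : ρ ≤ 1) : arcCosCorr ρ = ρ ↔ ρ = 1 := by
  refine ⟨fun h => ?_, fun h => h ▸ arcCosCorr_one⟩
  by_contra hne
  exact (lt_arcCosCorr h1 (lt_of_le_of_ne h2 hne)).ne' h

lemma continuous_arcCosCorr : Continuous arcCosCorr := by
  unfold arcCosCorr
  fun_prop

/-- One ReLU layer maps the covariances `(K(x,x), K(x',x'), K(x,x'))` to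
`σ_b² + (σ_w²/2) · arcCosKernel (K(x,x)) (K(x',x')) (K(x,x'))`. -/
noncomputable def arcCosKernel (p q r : ℝ) : ℝ :=
  √p * √q * arcCosCorr (r / (√p * √q))

section ArcCosKernel

variable {p q r : ℝ}

lemma arcCosKernel_self (hp : 0 ≤ p) : arcCosKernel p p p = p := by
  rcases hp.eq_or_lt with rfl | hp
  · simp [arcCosKernel]
  · rw [arcCosKernel, mul_self_sqrt hp.le, div_self hp.ne', arcCosCorr_one, mul_one]

lemma arcCosKernel_div {t : ℝ} (ht : 0 < t) :
    arcCosKernel (p / t) (q / t) (r / t) = arcCosKernel p q r / t := by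
  have hst : √t * √t = t := mul_self_sqrt ht.le
  have harg : r / t / (√p / √t * (√q / √t)) = r / (√p * √q) := by
    rw [div_mul_div_comm, hst]
    exact div_div_div_cancel_right₀ ht.ne' _ _
  rw [arcCosKernel, sqrt_div' _ ht.le, sqrt_div' _ ht.le, harg, arcCosKernel, div_mul_div_comm,
    hst, div_mul_eq_mul_div]

lemma abs_le_sqrt_mul_sqrt (hp : 0 ≤ p) (h : r ^ 2 ≤ p * q) : |r| ≤ √p * √q := by
  rw [← sqrt_mul hp]
  exact abs_le_sqrt h

lemma abs_div_sqrt_mul_sqrt_le_one (hp : 0 ≤ p) (h : r ^ 2 ≤ p * q) :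
    |r / (√p * √q)| ≤ 1 := by
  rw [abs_div, abs_of_nonneg (mul_nonneg (sqrt_nonneg p) (sqrt_nonneg q))]
  exact div_le_one_of_le₀ (abs_le_sqrt_mul_sqrt hp h) (by positivity)

lemma arcCosKernel_le_sqrt_mul_sqrt (hp : 0 ≤ p) (h : r ^ 2 ≤ p * q) :
    arcCosKernel p q r ≤ √p * √q :=
  mul_le_of_le_one_right (by positivity)
    (arcCosCorr_le_one (abs_le.1 (abs_div_sqrt_mul_sqrt_le_one hp h)).2)

lemma le_arcCosKernel (hp : 0 ≤ p) (h : r ^ 2 ≤ p * q) : r ≤ arcCosKernel p q r := by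
  have hρ := abs_le.1 (abs_div_sqrt_mul_sqrt_le_one hp h)
  rcases (by positivity : 0 ≤ √p * √q).eq_or_lt with hs | hs
  · have hr := abs_le_sqrt_mul_sqrt hp h
    rw [← hs, abs_nonpos_iff] at hr
    simp [arcCosKernel, ← hs, hr]
  · calc r = √p * √q * (r / (√p * √q)) := (mul_div_cancel₀ r hs.ne').symm
      _ ≤ arcCosKernel p q r := mul_le_mul_of_nonneg_left (le_arcCosCorr hρ.1 hρ.2) hs.le

lemma eq_sqrt_mul_sqrt_of_arcCosKernel_eq (hp : 0 ≤ p) (h : r ^ 2 ≤ p * q)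
    (hfix : arcCosKernel p q r = r) : r = √p * √q := by
  have hρ := abs_le.1 (abs_div_sqrt_mul_sqrt_le_one hp h)
  rcases (by positivity : 0 ≤ √p * √q).eq_or_lt with hs | hs
  · have hr := abs_le_sqrt_mul_sqrt hp h
    rw [← hs, abs_nonpos_iff] at hr
    rw [hr, ← hs]
  · have hρfix : arcCosCorr (r / (√p * √q)) = r / (√p * √q) := by
      rw [eq_div_iff hs.ne', mul_comm]
      exact hfix
    exact (div_eq_one_iff_eq hs.ne').1 ((arcCosCorr_eq_self_iff hρ.1 hρ.2).1 hρfix)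

lemma sq_add_arcCosKernel_le {β : ℝ} (hβ : 0 ≤ β) (hp : 0 ≤ p) (hq : 0 ≤ q)
    (h : r ^ 2 ≤ p * q) : (β + arcCosKernel p q r) ^ 2 ≤ (β + p) * (β + q) := by
  have hlow := le_arcCosKernel hp h
  have hup := arcCosKernel_le_sqrt_mul_sqrt hp h
  have hr := (abs_le.1 (abs_le_sqrt_mul_sqrt hp h)).1
  calc (β + arcCosKernel p q r) ^ 2 ≤ (β + √p * √q) ^ 2 := sq_le_sq' (by linarith) (by linarith)
    _ ≤ (β + √p ^ 2) * (β + √q ^ 2) := by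
      nlinarith [mul_nonneg hβ (sq_nonneg (√p - √q))]
    _ = (β + p) * (β + q) := by rw [sq_sqrt hp, sq_sqrt hq]

end ArcCosKernel

lemma Filter.Tendsto.arcCosKernel {α : Type*} {l : Filter α} {p q r : α → ℝ} {p₀ q₀ r₀ : ℝ}
    (hp : Tendsto p l (𝓝 p₀)) (hq : Tendsto q l (𝓝 q₀)) (hr : Tendsto r l (𝓝 r₀))
    (h : √p₀ * √q₀ ≠ 0) :
    Tendsto (fun t => arcCosKernel (p t) (q t) (r t)) l (𝓝 (arcCosKernel p₀ q₀ r₀)) :=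
  (hp.sqrt.mul hq.sqrt).mul
    ((continuous_arcCosCorr.tendsto _).comp (hr.div (hp.sqrt.mul hq.sqrt) h))

lemma Matrix.PosSemidef.sq_apply_le {n : Type*} {A : Matrix n n ℝ} (hA : A.PosSemidef) (i j : n) :
    A i j ^ 2 ≤ A i i * A j j := by
  have hdet := (hA.submatrix ![i, j]).det_nonneg
  have hsym : A j i = A i j := hA.isHermitian.apply i j
  rw [Matrix.det_fin_two] at hdet
  simp only [Matrix.submatrix_apply, Matrix.cons_val_zero, Matrix.cons_val_one, hsym] at hdet
  rw [sq]
  linarith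

lemma hasSum_div_pow_succ {a : ℝ} (ha : 1 < a) (b : ℝ) :
    HasSum (fun l : ℕ => b / a ^ (l + 1)) (b / (a - 1)) := by
  have ha0 : 0 < a := by linarith
  have h := (hasSum_geometric_of_lt_one (inv_nonneg.2 ha0.le) (inv_lt_one_of_one_lt₀ ha)).mul_left
    (b / a)
  have hterm : (fun l : ℕ => b / a ^ (l + 1)) = fun l => b / a * a⁻¹ ^ l := by
    ext l
    rw [inv_pow, pow_succ]
    field_simp
  have hsum : b / (a - 1) = b / a * (1 - a⁻¹)⁻¹ := by
    field_simp
  rwa [hterm, hsum]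

/-- The covariance recursion after dividing layer `l` by `(σ_w²/2)^l`; `β l` is the rescaled
bias variance entering layer `l + 1`. -/
def ArcCosRecursion {ι : Type*} (β : ℕ → ℝ) (κ : ℕ → Matrix ι ι ℝ) : Prop :=
  ∀ l x x', κ (l + 1) x x' = β l + arcCosKernel (κ l x x) (κ l x' x') (κ l x x')

lemma arcCosRecursion_div_pow {ι : Type*} {a b : ℝ} (ha : 0 < a) {K : ℕ → Matrix ι ι ℝ}
    (hrec : ∀ l x x', K (l + 1) x x' = b + a * arcCosKernel (K l x x) (K l x' x') (K l x x')) :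
    ArcCosRecursion (fun l => b / a ^ (l + 1)) (fun l => Matrix.of fun x x' => K l x x' / a ^ l) := by
  intro l x x'
  have hal : 0 < a ^ l := pow_pos ha l
  simp only [Matrix.of_apply]
  rw [arcCosKernel_div hal, hrec, pow_succ]
  field_simp

namespace ArcCosRecursion

variable {ι : Type*} {β : ℕ → ℝ} {κ : ℕ → Matrix ι ι ℝ}

lemma diag_eq_add_sum (h : ArcCosRecursion β κ) (hβ : ∀ l, 0 ≤ β l) (h0 : ∀ x, 0 ≤ κ 0 x x)
    (l : ℕ) (x : ι) : κ l x x = κ 0 x x + ∑ k ∈ Finset.range l, β k := by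
  induction l with
  | zero => simp
  | succ l ih =>
    have hnn : 0 ≤ κ l x x := ih ▸ add_nonneg (h0 x) (Finset.sum_nonneg fun k _ => hβ k)
    rw [h, arcCosKernel_self hnn, Finset.sum_range_succ, ih]
    ring

lemma diag_nonneg (h : ArcCosRecursion β κ) (hβ : ∀ l, 0 ≤ β l) (h0 : ∀ x, 0 ≤ κ 0 x x)
    (l : ℕ) (x : ι) : 0 ≤ κ l x x :=
  h.diag_eq_add_sum hβ h0 l x ▸ add_nonneg (h0 x) (Finset.sum_nonneg fun k _ => hβ k)

lemma tendsto_diag (h : ArcCosRecursion β κ) (hβ : ∀ l, 0 ≤ β l) (h0 : ∀ x, 0 ≤ κ 0 x x)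
    {b : ℝ} (hb : HasSum β b) (x : ι) :
    Tendsto (fun l => κ l x x) atTop (𝓝 (κ 0 x x + b)) := by
  rw [show (fun l => κ l x x) = fun l => κ 0 x x + ∑ k ∈ Finset.range l, β k from
    funext (h.diag_eq_add_sum hβ h0 · x)]
  exact hb.tendsto_sum_nat.const_add _

lemma sq_le_mul_diag (h : ArcCosRecursion β κ) (hβ : ∀ l, 0 ≤ β l) (h0 : ∀ x, 0 ≤ κ 0 x x)
    (hcs : ∀ x x', κ 0 x x' ^ 2 ≤ κ 0 x x * κ 0 x' x') :
    ∀ l x x', κ l x x' ^ 2 ≤ κ l x x * κ l x' x'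
  | 0 => hcs
  | l + 1 => fun x x' => by
    have hd := h.diag_nonneg hβ h0 l
    rw [h l x x', h l x x, h l x' x', arcCosKernel_self (hd x), arcCosKernel_self (hd x')]
    exact sq_add_arcCosKernel_le (hβ l) (hd x) (hd x') (h.sq_le_mul_diag hβ h0 hcs l x x')

lemma monotone_apply (h : ArcCosRecursion β κ) (hβ : ∀ l, 0 ≤ β l) (h0 : ∀ x, 0 ≤ κ 0 x x)
    (hcs : ∀ x x', κ 0 x x' ^ 2 ≤ κ 0 x x * κ 0 x' x') (x x' : ι) :
    Monotone fun l => κ l x x' :=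
  monotone_nat_of_le_succ fun l => by
    have := le_arcCosKernel (h.diag_nonneg hβ h0 l x) (h.sq_le_mul_diag hβ h0 hcs l x x')
    rw [h l x x']
    linarith [hβ l]

lemma tendsto_apply_of_tendsto_diag (h : ArcCosRecursion β κ) (hβ : ∀ l, 0 ≤ β l)
    (hβ0 : Tendsto β atTop (𝓝 0)) (h0 : ∀ x, 0 ≤ κ 0 x x)
    (hcs0 : ∀ x x', κ 0 x x' ^ 2 ≤ κ 0 x x * κ 0 x' x') {v : ι → ℝ} (hv : ∀ x, 0 ≤ v x)
    (hdiag : ∀ x, Tendsto (fun l => κ l x x) atTop (𝓝 (v x ^ 2))) (x x' : ι) :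
    Tendsto (fun l => κ l x x') atTop (𝓝 (v x * v x')) := by
  have hcs := h.sq_le_mul_diag hβ h0 hcs0
  have hsqrt : ∀ y, √(v y ^ 2) = v y := fun y => sqrt_sq (hv y)
  have hs := (hdiag x).sqrt.mul (hdiag x').sqrt
  rw [hsqrt, hsqrt] at hs
  have hbound : ∀ l, |κ l x x'| ≤ √(κ l x x) * √(κ l x' x') := fun l =>
    abs_le_sqrt_mul_sqrt (h.diag_nonneg hβ h0 l x) (hcs l x x')
  rcases (mul_nonneg (hv x) (hv x')).eq_or_lt with hv0 | hvpos
  · rw [← hv0] at hs ⊢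
    exact tendsto_of_tendsto_of_tendsto_of_le_of_le (neg_zero (G := ℝ) ▸ hs.neg) hs
      (fun l => (abs_le.1 (hbound l)).1) (fun l => (abs_le.1 (hbound l)).2)
  have hbdd : BddAbove (Set.range fun l => κ l x x') :=
    hs.bddAbove_range.range_mono _ fun l => (le_abs_self _).trans (hbound l)
  obtain ⟨c, hc⟩ : ∃ c, Tendsto (fun l => κ l x x') atTop (𝓝 c) :=
    ⟨_, tendsto_atTop_ciSup (h.monotone_apply hβ h0 hcs0 x x') hbdd⟩
  have hfix : arcCosKernel (v x ^ 2) (v x' ^ 2) c = c := by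
    have hlim := hβ0.add
      ((hdiag x).arcCosKernel (hdiag x') hc (by rw [hsqrt, hsqrt]; exact hvpos.ne'))
    rw [zero_add] at hlim
    exact tendsto_nhds_unique (hlim.congr fun l => (h l x x').symm)
      (hc.comp (tendsto_add_atTop_nat 1))
  have hcs_lim : c ^ 2 ≤ v x ^ 2 * v x' ^ 2 :=
    le_of_tendsto_of_tendsto' (hc.pow 2) ((hdiag x).mul (hdiag x')) (hcs · x x')
  have hc_eq := eq_sqrt_mul_sqrt_of_arcCosKernel_eq (sq_nonneg _) hcs_lim hfix
  rw [hsqrt, hsqrt] at hc_eq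
  rwa [← hc_eq]

lemma tendsto_apply (h : ArcCosRecursion β κ) (hβ : ∀ l, 0 ≤ β l) {b : ℝ} (hb : HasSum β b)
    (h0 : (κ 0).PosSemidef) {v : ι → ℝ} (hv : ∀ x, v x = √(κ 0 x x + b)) (x x' : ι) :
    Tendsto (fun l => κ l x x') atTop (𝓝 (v x * v x')) := by
  have hd0 : ∀ x, 0 ≤ κ 0 x x := fun x => h0.diag_nonneg
  refine h.tendsto_apply_of_tendsto_diag hβ hb.summable.tendsto_atTop_zero hd0 h0.sq_apply_le
    (fun y => hv y ▸ sqrt_nonneg _) (fun y => ?_) x x'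
  rw [hv, sq_sqrt (add_nonneg (hd0 y) (hb.nonneg hβ))]
  exact h.tendsto_diag hβ hd0 hb y

end ArcCosRecursion

/-- for the deep fully connected ReLU network covariance recursion with
`σ_w² > 2`, letting `c_l = (σ_w²/2)^l` and `v_x = √(σ_b²/(σ_w²/2 - 1) + K⁰(x,x))`,
the scaled diagonal `K^{(l)}(x,x)/c_l → v_x²` and in fact
`K^{(l)}(x,x')/c_l → v_x v_{x'}` for all pairs, i.e. `K^{(l)}/c_l → v vᵀ`. -/
theorem mlp_cov_scaled_tendsto_rank_one {N : ℕ} (σb2 σw2 : ℝ)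
    (hσw : 2 < σw2) (hσb : 0 ≤ σb2)
    (K : ℕ → Matrix (Fin N) (Fin N) ℝ) (hK0 : (K 0).PosSemidef)
    (hrec : ∀ l x x', K (l + 1) x x' =
      σb2 + (σw2 / 2) * Real.sqrt (K l x x) * Real.sqrt (K l x' x') *
        arcCosCorr (K l x x' / (Real.sqrt (K l x x) * Real.sqrt (K l x' x'))))
    (v : Fin N → ℝ)
    (hv : ∀ x, v x = Real.sqrt (σb2 / (σw2 / 2 - 1) + K 0 x x)) :
    (∀ x, Filter.Tendsto (fun l => K l x x / (σw2 / 2) ^ l) Filter.atTop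
      (nhds (v x ^ 2))) ∧
    (∀ x x', Filter.Tendsto (fun l => K l x x' / (σw2 / 2) ^ l) Filter.atTop
      (nhds (v x * v x'))) := by
  have ha : 1 < σw2 / 2 := by linarith
  have hκ := arcCosRecursion_div_pow (zero_lt_one.trans ha) (K := K) fun l x x' => by
    rw [hrec, arcCosKernel]
    ring
  have hκ0 : (Matrix.of fun x x' => K 0 x x' / (σw2 / 2) ^ 0) = K 0 := by
    ext
    simp
  have hlim := hκ.tendsto_apply (fun l => by positivity) (hasSum_div_pow_succ ha σb2)
    (hκ0.symm ▸ hK0) (v := v) fun x => by rw [hv, hκ0, add_comm]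
  exact ⟨fun x => by simpa [sq] using hlim x x, hlim⟩
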